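/- Let d ≥ r ≥ 1 be integers, let p_1, …, p_r be positive integers, and let v^{(i,j)} ∈ ℝ^d for i ∈ [r], j ∈ [p_i] be arbitrary vectors. Define f_V : ∏_{i=1}^r Δ_{p_i} → ℝ by f_V(x) = det(W(x)ᵀ W(x))^{1/2}, where W(x) ∈ ℝ^{d×r} is the matrix whose i-th column is Σ_{j=1}^{p_i} x^i_j v^{(i,j)}. Then the maximum of f_V over ∏_{i=1}^r Δ_{p_i} is attained at a vertex: there exist indices j_1 ∈ [p_1], …, j_r ∈ [p_r] such that f_V(e_{j_1}, …, e_{j_r}) = max { f_V(x) : x ∈ ∏_{i=1}^r Δ_{p_i} }, where e_j denotes the j-th standard basis vector. -/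

import Mathlib

open Matrix

noncomputable section

/-- The volume function `f_V(x) = det(W(x)ᵀ W(x))^{1/2}`, where the `i`-th column of
`W(x) ∈ ℝ^{d×r}` is `∑_j x^i_j v^{(i,j)}`. -/
def volFn {d r : ℕ} (p : Fin r → ℕ) (v : ∀ i : Fin r, Fin (p i) → (Fin d → ℝ))
    (x : ∀ i : Fin r, Fin (p i) → ℝ) : ℝ :=
  Real.sqrt (Matrix.det
    ((Matrix.of fun (a : Fin d) (i : Fin r) => ∑ j, x i j * v i j a)ᵀ *
      Matrix.of fun (a : Fin d) (i : Fin r) => ∑ j, x i j * v i j a))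

/-!
With all blocks of `x` but the `i`-th fixed, `det (W(x)ᵀ W(x))` is a positive semidefinite
quadratic form in the `i`-th column of `W(x)`, which depends linearly on `x^i`. It is therefore
convex in `x^i`, so its maximum over `Δ_{p_i}` is attained at a vertex. Starting from a maximiser
(which exists by compactness) and replacing its blocks one at a time by such vertices yields a
maximiser at a vertex of the product.
-/

open Set Function

section BilinForm

variable {𝕜 E : Type*} [Field 𝕜] [LinearOrder 𝕜] [IsStrictOrderedRing 𝕜]
  [AddCommGroup E] [Module 𝕜 E]

-- For `s + t = 1`: `s Q a + t Q b - Q (s a + t b) = s t Q (a - b)` with `Q x = B x x`.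
theorem LinearMap.BilinForm.convexOn_apply_self (B : LinearMap.BilinForm 𝕜 E)
    (hB : ∀ x, 0 ≤ B x x) : ConvexOn 𝕜 univ fun x => B x x := by
  refine ⟨convex_univ, fun a _ b _ s t hs ht hst => ?_⟩
  have hab := mul_nonneg (mul_nonneg hs ht) (hB (a - b))
  obtain rfl : s = 1 - t := by linarith
  simp only [map_add, map_smul, map_sub, LinearMap.add_apply, LinearMap.smul_apply,
    LinearMap.sub_apply, smul_eq_mul] at hab ⊢
  linear_combination hab

end BilinForm

namespace Matrix

variable {R m n : Type*} [CommRing R] [Fintype m] [Fintype n] [DecidableEq n]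

def gramDetUpdateCol (M : Matrix m n R) (j : n) : LinearMap.BilinForm R (m → R) :=
  LinearMap.mk₂ R (fun c c' => ((M.updateCol j c)ᵀ * M.updateCol j c').det)
    (fun c c' e => by
      simp only [← updateRow_transpose, updateRow_mul, add_vecMul, det_updateRow_add])
    (fun a c e => by
      simp only [← updateRow_transpose, updateRow_mul, smul_vecMul, det_updateRow_smul,
        smul_eq_mul])
    (fun c e e' => by simp only [mul_updateCol, mulVec_add, det_updateCol_add])
    (fun c a e => by
      simp only [mul_updateCol, mulVec_smul, det_updateCol_smul, smul_eq_mul])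

@[simp]
theorem gramDetUpdateCol_apply (M : Matrix m n R) (j : n) (c c' : m → R) :
    M.gramDetUpdateCol j c c' = ((M.updateCol j c)ᵀ * M.updateCol j c').det :=
  rfl

theorem det_transpose_mul_self_nonneg (M : Matrix m n ℝ) : 0 ≤ (Mᵀ * M).det := by
  simpa using (posSemidef_conjTranspose_mul_self M).det_nonneg

theorem convexOn_det_transpose_mul_self_updateCol (M : Matrix m n ℝ) (j : n) :
    ConvexOn ℝ univ fun c => ((M.updateCol j c)ᵀ * M.updateCol j c).det := by
  simpa using (M.gramDetUpdateCol j).convexOn_apply_self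
    fun c => det_transpose_mul_self_nonneg _

end Matrix

theorem Set.exists_mem_pi_le_of_le_update {ι : Type*} [Fintype ι] [DecidableEq ι]
    {X : ι → Type*} {β : Type*} [Preorder β] {f : (∀ i, X i) → β} {S V : ∀ i, Set (X i)}
    (hVS : ∀ i, V i ⊆ S i)
    (hf : ∀ x ∈ univ.pi S, ∀ i, ∃ e ∈ V i, f x ≤ f (update x i e)) :
    ∀ x ∈ univ.pi S, ∃ y ∈ univ.pi V, f x ≤ f y := by
  intro x hx
  suffices ∀ t : Finset ι, ∃ y ∈ univ.pi S, (∀ i ∈ t, y i ∈ V i) ∧ f x ≤ f y by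
    obtain ⟨y, -, hyV, hxy⟩ := this Finset.univ
    exact ⟨y, fun i _ => hyV i (Finset.mem_univ i), hxy⟩
  intro t
  induction t using Finset.induction_on with
  | empty => exact ⟨x, hx, by simp, le_rfl⟩
  | insert i t _ ih =>
    obtain ⟨y, hyS, hyV, hxy⟩ := ih
    obtain ⟨e, heV, hye⟩ := hf y hyS i
    refine ⟨update y i e, ?_, ?_, hxy.trans hye⟩
    · exact update_mem_pi_iff_of_mem hyS |>.2 fun _ => hVS i heV
    · intro k hk
      rcases eq_or_ne k i with rfl | hki
      · simpa using heV
      · simpa [hki] using hyV k (Finset.mem_of_mem_insert_of_ne hk hki)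

section VolumeFunction

variable {d r : ℕ} (p : Fin r → ℕ) (v : ∀ i : Fin r, Fin (p i) → (Fin d → ℝ))

def columnMatrix (x : ∀ i : Fin r, Fin (p i) → ℝ) : Matrix (Fin d) (Fin r) ℝ :=
  Matrix.of fun a i => ∑ j, x i j * v i j a

theorem volFn_eq_sqrt_det (x : ∀ i : Fin r, Fin (p i) → ℝ) :
    volFn p v x = Real.sqrt ((columnMatrix p v x)ᵀ * columnMatrix p v x).det :=
  rfl

theorem columnMatrix_update (x : ∀ i : Fin r, Fin (p i) → ℝ) (i : Fin r)
    (y : Fin (p i) → ℝ) :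
    columnMatrix p v (update x i y) =
      (columnMatrix p v x).updateCol i (Fintype.linearCombination ℝ (v i) y) := by
  ext a k
  rcases eq_or_ne k i with rfl | hki
  · simp [columnMatrix, Fintype.linearCombination_apply]
  · simp [columnMatrix, hki]

theorem continuous_volFn : Continuous (volFn p v) := by
  unfold volFn
  fun_prop

theorem exists_volFn_le_volFn_update_single (x : ∀ i : Fin r, Fin (p i) → ℝ) (i : Fin r)
    (hx : x i ∈ stdSimplex ℝ (Fin (p i))) :
    ∃ j, volFn p v x ≤ volFn p v (update x i (Pi.single j 1)) := by
  have hconv := ((columnMatrix p v x).convexOn_det_transpose_mul_self_updateCol i).comp_linearMap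
    (Fintype.linearCombination ℝ (v i))
  rw [← convexHull_rangle_single_eq_stdSimplex] at hx
  obtain ⟨_, ⟨j, rfl⟩, hle⟩ := hconv.exists_ge_of_mem_convexHull (subset_univ _) hx
  refine ⟨j, ?_⟩
  calc volFn p v x = volFn p v (update x i (x i)) := by rw [update_eq_self]
    _ ≤ volFn p v (update x i (Pi.single j 1)) := by
      simp only [volFn_eq_sqrt_det, columnMatrix_update]
      exact Real.sqrt_le_sqrt hle

end VolumeFunction

theorem volume_function_max_at_vertex_general
    (d r : ℕ)
    (p : Fin r → ℕ) (hp : ∀ i, 0 < p i)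
    (v : ∀ i : Fin r, Fin (p i) → (Fin d → ℝ)) :
    ∃ jsel : ∀ i : Fin r, Fin (p i),
      volFn p v (fun i => Pi.single (jsel i) 1) =
        sSup (volFn p v '' Set.univ.pi fun i => stdSimplex ℝ (Fin (p i))) := by
  set S := univ.pi fun i => stdSimplex ℝ (Fin (p i))
  have hS : S.Nonempty :=
    ⟨fun i => Pi.single ⟨0, hp i⟩ 1, fun i _ => single_mem_stdSimplex ℝ _⟩
  obtain ⟨x₀, hx₀, hmax⟩ := (isCompact_univ_pi fun i => isCompact_stdSimplex ℝ _).exists_isMaxOn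
    hS (continuous_volFn p v).continuousOn
  obtain ⟨x, hx, hx₀x⟩ := exists_mem_pi_le_of_le_update
    (S := fun i => stdSimplex ℝ (Fin (p i))) (V := fun i => range fun j => Pi.single j 1)
    (fun i => range_subset_iff.2 (single_mem_stdSimplex ℝ))
    (fun x hx i => by
      obtain ⟨j, hj⟩ := exists_volFn_le_volFn_update_single p v x i (hx i (mem_univ i))
      exact ⟨_, mem_range_self j, hj⟩)
    x₀ hx₀
  choose jsel hjsel using fun i => hx i (mem_univ i)
  obtain rfl : (fun i => Pi.single (jsel i) 1) = x := funext hjsel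
  refine ⟨jsel, (IsGreatest.csSup_eq ⟨mem_image_of_mem _ fun i _ => ?_, ?_⟩).symm⟩
  · exact single_mem_stdSimplex ℝ _
  · rintro _ ⟨y, hy, rfl⟩
    exact (hmax hy).trans hx₀x

/-- **Roundability of the volume function** (Lemma 4.4): the maximum of `f_V` over the product
of simplices `∏_{i=1}^r Δ_{p_i}` is attained at a vertex, i.e. at a tuple of standard basis
vectors `(e_{j_1}, …, e_{j_r})`. -/
theorem volume_function_max_at_vertex
    (d r : ℕ) (hr : 1 ≤ r) (hdr : r ≤ d)
    (p : Fin r → ℕ) (hp : ∀ i, 0 < p i)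
    (v : ∀ i : Fin r, Fin (p i) → (Fin d → ℝ)) :
    ∃ jsel : ∀ i : Fin r, Fin (p i),
      volFn p v (fun i => Pi.single (jsel i) 1) =
        sSup (volFn p v '' Set.univ.pi fun i => stdSimplex ℝ (Fin (p i))) :=
  volume_function_max_at_vertex_general d r p hp v

end
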